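/- The marginal mean at node j is finite under the CONGA model: E[X_j] = Σ_{x∈ℕ^P} x_j p_{α,β}(x) < ∞. -/

import Mathlib

open scoped BigOperators

noncomputable def nodeSum {P : ℕ} (α : Fin P → ℝ) (x : Fin P → ℕ) : ℝ :=
  ∑ j, (α j * (x j : ℝ) - Real.log (Nat.factorial (x j)))

noncomputable def edgeSum {P : ℕ} (β : Fin P → Fin P → ℝ) (F : ℕ → ℝ) (x : Fin P → ℕ) : ℝ :=
  ∑ j, ∑ l, if j < l then β j l * F (x j) * F (x l) else 0

/-- Unnormalized weight of the pairwise MRF for counts. -/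
noncomputable def w {P : ℕ} (α : Fin P → ℝ) (β : Fin P → Fin P → ℝ) (F : ℕ → ℝ)
    (x : Fin P → ℕ) : ℝ :=
  Real.exp (nodeSum α x - edgeSum β F x)

/-- Normalizing constant A(α,β). -/
noncomputable def Anorm {P : ℕ} (α : Fin P → ℝ) (β : Fin P → Fin P → ℝ) (F : ℕ → ℝ) : ℝ :=
  ∑' x : Fin P → ℕ, w α β F x

/-- The transformation F(x) = (arctan x)^θ. -/
noncomputable def Fpow (θ : ℝ) : ℕ → ℝ := fun n => Real.arctan (n : ℝ) ^ θ

/-! Since the interaction term is bounded by `U² ∑ |β|`, the weight `w α β F` is dominated by a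
constant times `exp (nodeSum α ·)`, a product of unnormalised Poisson weights, which is summable.
The extra factor `x j ≤ exp (x j)` is absorbed by shifting `α j` by one. -/

theorem summable_fin_pi_prod_of_nonneg {P : ℕ} (f : Fin P → ℕ → ℝ) (hf : ∀ i n, 0 ≤ f i n)
    (hs : ∀ i, Summable (f i)) : Summable (fun x : Fin P → ℕ => ∏ i, f i (x i)) := by
  induction P with
  | zero => exact Summable.of_finite
  | succ P ih =>
    rw [← (Fin.consEquiv fun _ : Fin (P + 1) => ℕ).summable_iff]
    have hcons : ((fun x : Fin (P + 1) → ℕ => ∏ i, f i (x i)) ∘ Fin.consEquiv fun _ => ℕ)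
        = fun p : ℕ × (Fin P → ℕ) => f 0 p.1 * ∏ i : Fin P, f i.succ (p.2 i) := by
      funext p
      simp [Fin.consEquiv, Fin.prod_univ_succ]
    rw [hcons]
    exact (hs 0).mul_of_nonneg (g := fun y : Fin P → ℕ => ∏ i : Fin P, f i.succ (y i))
      (ih _ (fun i => hf i.succ) (fun i => hs i.succ)) (hf 0)
      (fun y => Finset.prod_nonneg fun i _ => hf i.succ _)

section NodeSum

variable {P : ℕ}

theorem exp_nodeSum (α : Fin P → ℝ) (x : Fin P → ℕ) :
    Real.exp (nodeSum α x) = ∏ i, Real.exp (α i) ^ x i / (x i).factorial := by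
  rw [nodeSum, Real.exp_sum]
  refine Finset.prod_congr rfl fun i _ => ?_
  rw [Real.exp_sub, Real.exp_log (by positivity), ← Real.exp_nat_mul, mul_comm]

theorem summable_exp_nodeSum (α : Fin P → ℝ) :
    Summable (fun x : Fin P → ℕ => Real.exp (nodeSum α x)) := by
  simp_rw [exp_nodeSum]
  exact summable_fin_pi_prod_of_nonneg (fun i n => Real.exp (α i) ^ n / n.factorial)
    (fun i n => by positivity)
    (fun i => Real.summable_pow_div_factorial _)

theorem nodeSum_add_single_one (α : Fin P → ℝ) (j : Fin P) (x : Fin P → ℕ) :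
    nodeSum (α + Pi.single j 1) x = nodeSum α x + x j := by
  simp only [nodeSum, Pi.add_apply, add_mul, add_sub_right_comm, Finset.sum_add_distrib,
    Pi.single_apply, ite_mul, one_mul, zero_mul, Finset.sum_ite_eq', Finset.mem_univ, if_true]

theorem summable_coord_mul_exp_nodeSum (α : Fin P → ℝ) (j : Fin P) :
    Summable (fun x : Fin P → ℕ => (x j : ℝ) * Real.exp (nodeSum α x)) := by
  refine (summable_exp_nodeSum (α + Pi.single j 1)).of_nonneg_of_le
    (fun x => by positivity) fun x => ?_
  rw [nodeSum_add_single_one, Real.exp_add, mul_comm]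
  gcongr
  linarith [Real.add_one_le_exp (x j : ℝ)]

end NodeSum

theorem abs_edgeSum_le {P : ℕ} (β : Fin P → Fin P → ℝ) {F : ℕ → ℝ} {U : ℝ}
    (hF : ∀ n, |F n| ≤ U) (x : Fin P → ℕ) :
    |edgeSum β F x| ≤ U ^ 2 * ∑ j, ∑ l, |β j l| := by
  have hU : 0 ≤ U := (abs_nonneg _).trans (hF 0)
  rw [Finset.mul_sum]
  refine (Finset.abs_sum_le_sum_abs _ _).trans (Finset.sum_le_sum fun j _ => ?_)
  rw [Finset.mul_sum]
  refine (Finset.abs_sum_le_sum_abs _ _).trans (Finset.sum_le_sum fun l _ => ?_)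
  split_ifs
  · calc |β j l * F (x j) * F (x l)| = |β j l| * |F (x j)| * |F (x l)| := by
          rw [abs_mul, abs_mul]
      _ ≤ |β j l| * U * U := by gcongr <;> exact hF _
      _ = U ^ 2 * |β j l| := by ring
  · rw [abs_zero]
    positivity

theorem w_le_exp_mul_exp_nodeSum {P : ℕ} (α : Fin P → ℝ) (β : Fin P → Fin P → ℝ) {F : ℕ → ℝ}
    {U : ℝ} (hF : ∀ n, |F n| ≤ U) (x : Fin P → ℕ) :
    w α β F x ≤ Real.exp (U ^ 2 * ∑ j, ∑ l, |β j l|) * Real.exp (nodeSum α x) := by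
  rw [w, ← Real.exp_add, Real.exp_le_exp]
  linarith [(abs_le.1 (abs_edgeSum_le β hF x)).1]

theorem stmt10 (P : ℕ) (α : Fin P → ℝ) (β : Fin P → Fin P → ℝ)
    (F : ℕ → ℝ) (U : ℝ) (hF : ∀ x, |F x| ≤ U) (j : Fin P) :
    Summable (fun x : Fin P → ℕ => (x j : ℝ) * (w α β F x / Anorm α β F)) := by
  have hweighted : Summable (fun x : Fin P → ℕ => (x j : ℝ) * w α β F x) := by
    refine ((summable_coord_mul_exp_nodeSum α j).mul_left
      (Real.exp (U ^ 2 * ∑ j, ∑ l, |β j l|))).of_nonneg_of_le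
      (fun x => mul_nonneg (Nat.cast_nonneg _) (Real.exp_pos _).le) fun x => ?_
    rw [mul_left_comm]
    exact mul_le_mul_of_nonneg_left (w_le_exp_mul_exp_nodeSum α β hF x) (Nat.cast_nonneg _)
  simpa only [mul_div_assoc] using hweighted.div_const (Anorm α β F)
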